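/- Let (𝒳₁×𝒳₂, p(y|x₁,x₂), 𝒴) be a discrete memoryless multiple access channel, 𝒰 a finite set, δ ≥ 0, and p(u,x₁,x₂) a joint pmf with I(X₁;X₂|U) ≤ δ. Let H(Y|U,X₁,X₂) denote the conditional output entropy under p(u,x₁,x₂), and H_ind(Y|U,X₁,X₂) the conditional output entropy when the joint input law p(u,x₁,x₂) is replaced by p_ind(u,x₁,x₂) = p(u)p(x₁|u)p(x₂|u). Then |H(Y|U,X₁,X₂) − H_ind(Y|U,X₁,X₂)| ≤ (log₂|𝒴|)·√(2δ ln 2). -/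

import Mathlib

open scoped BigOperators

noncomputable section

/-- Shannon entropy (base 2) of a (sub)probability mass function on a finite type. -/
def ent2 {α : Type} [Fintype α] (p : α → ℝ) : ℝ :=
  -∑ a, p a * Real.logb 2 (p a)

/-- Conditional mutual information `I(A;B|U)` (in bits) of the joint pmf `p` on `U × A × B`,
given in curried form, computed as `H(A|U) + H(B|U) - H(A,B|U)`. -/
def condMI {U A B : Type} [Fintype U] [Fintype A] [Fintype B]
    (p : U → A → B → ℝ) : ℝ :=
  ent2 (fun ua : U × A => ∑ b, p ua.1 ua.2 b)
    + ent2 (fun ub : U × B => ∑ a, p ub.1 a ub.2)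
    - ent2 (fun uab : U × A × B => p uab.1 uab.2.1 uab.2.2)
    - ent2 (fun u : U => ∑ a, ∑ b, p u a b)

/-- `p` is a joint pmf on `U × A × B` (curried form). -/
def IsPMF3 {U A B : Type} [Fintype U] [Fintype A] [Fintype B] (p : U → A → B → ℝ) : Prop :=
  (∀ u a b, 0 ≤ p u a b) ∧ ∑ u, ∑ a, ∑ b, p u a b = 1

/-- A discrete memoryless multiple access channel with input alphabets `X1, X2` and
output alphabet `Y`. -/
structure MAC (X1 X2 Y : Type) [Fintype X1] [Fintype X2] [Fintype Y] where
  W : X1 → X2 → Y → ℝ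
  nonneg : ∀ x1 x2 y, 0 ≤ W x1 x2 y
  sum_one : ∀ x1 x2, ∑ y, W x1 x2 y = 1

variable {X1 X2 Y : Type} [Fintype X1] [Fintype X2] [Fintype Y]

/-- The set of values `(1/n) I(X₁ⁿ,X₂ⁿ;Yⁿ|U)` over all finite auxiliary alphabets `U`
(wlog `U = Fin k`) and all joint pmfs `p(u,x₁ⁿ,x₂ⁿ)` with `I(X₁ⁿ;X₂ⁿ|U) ≤ nδ`,
where `Yⁿ` is the output of the `n`-th extension of the MAC `M`. -/
def sigmaSet (M : MAC X1 X2 Y) (n : ℕ) (δ : ℝ) : Set ℝ :=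
  {r | ∃ (k : ℕ) (p : Fin k → (Fin n → X1) → (Fin n → X2) → ℝ),
    IsPMF3 p ∧ condMI p ≤ (n : ℝ) * δ ∧
    r = (1 / (n : ℝ)) *
      condMI (fun (u : Fin k) (x : (Fin n → X1) × (Fin n → X2)) (y : Fin n → Y) =>
        p u x.1 x.2 * ∏ t, M.W (x.1 t) (x.2 t) (y t)) }

/-- `σ_n(δ)`. -/
def sigmaN (M : MAC X1 X2 Y) (n : ℕ) (δ : ℝ) : ℝ := sSup (sigmaSet M n δ)

/-- `σ(δ) = lim_n σ_n(δ) = sup_n σ_n(δ)`. -/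
def sigmaF (M : MAC X1 X2 Y) (δ : ℝ) : ℝ := ⨆ n : ℕ, sigmaN M (n + 1) δ

/-- `⌊2^{nR}⌋`, the size of a message (or link) index set. -/
def msgSize (n : ℕ) (R : ℝ) : ℕ := ⌊(2 : ℝ) ^ ((n : ℝ) * R)⌋₊

/-- A `(2^{nR₁}, 2^{nR₂}, n)`-code for the MAC `M` with a
`((c1,c2),(d1,d2))`-cooperation facilitator. -/
structure Code (M : MAC X1 X2 Y) (n : ℕ) (R1 R2 c1 c2 d1 d2 : ℝ) where
  /-- encoder 1 to CF -/
  toCF1 : Fin (msgSize n R1) → Fin (msgSize n c1)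
  /-- encoder 2 to CF -/
  toCF2 : Fin (msgSize n R2) → Fin (msgSize n c2)
  /-- CF to encoder 1 -/
  cf1 : Fin (msgSize n c1) → Fin (msgSize n c2) → Fin (msgSize n d1)
  /-- CF to encoder 2 -/
  cf2 : Fin (msgSize n c1) → Fin (msgSize n c2) → Fin (msgSize n d2)
  /-- encoder 1 -/
  f1 : Fin (msgSize n R1) → Fin (msgSize n d1) → Fin n → X1
  /-- encoder 2 -/
  f2 : Fin (msgSize n R2) → Fin (msgSize n d2) → Fin n → X2
  /-- decoder -/
  dec : (Fin n → Y) → Fin (msgSize n R1) × Fin (msgSize n R2)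

/-- The error probability `λ_n(w₁,w₂)` of the code `C` on the message pair `(w₁,w₂)`. -/
def errProb {M : MAC X1 X2 Y} {n : ℕ} {R1 R2 c1 c2 d1 d2 : ℝ}
    (C : Code M n R1 R2 c1 c2 d1 d2)
    (w1 : Fin (msgSize n R1)) (w2 : Fin (msgSize n R2)) : ℝ :=
  ∑ y : Fin n → Y,
    if C.dec y ≠ (w1, w2) then
      ∏ t, M.W (C.f1 w1 (C.cf1 (C.toCF1 w1) (C.toCF2 w2)) t)
               (C.f2 w2 (C.cf2 (C.toCF1 w1) (C.toCF2 w2)) t) (y t)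
    else 0

/-- Average error probability of a code. -/
def avgErr {M : MAC X1 X2 Y} {n : ℕ} {R1 R2 c1 c2 d1 d2 : ℝ}
    (C : Code M n R1 R2 c1 c2 d1 d2) : ℝ :=
  (1 / (2 : ℝ) ^ ((n : ℝ) * (R1 + R2))) * ∑ w1, ∑ w2, errProb C w1 w2

/-- Maximal error probability of a code. -/
def maxErr {M : MAC X1 X2 Y} {n : ℕ} {R1 R2 c1 c2 d1 d2 : ℝ}
    (C : Code M n R1 R2 c1 c2 d1 d2) : ℝ :=
  sSup {e | ∃ w1 w2, e = errProb C w1 w2}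

/-- `(R₁,R₂)` is achievable under the average-error criterion for the MAC `M` with a
`((c1,c2),(d1,d2))`-CF. -/
def AchievableAvg (M : MAC X1 X2 Y) (c1 c2 d1 d2 : ℝ) (R : ℝ × ℝ) : Prop :=
  0 ≤ R.1 ∧ 0 ≤ R.2 ∧
  ∃ C : (n : ℕ) → Code M (n + 1) R.1 R.2 c1 c2 d1 d2,
    Filter.Tendsto (fun n => avgErr (C n)) Filter.atTop (nhds 0)

/-- `(R₁,R₂)` is achievable under the maximal-error criterion. -/
def AchievableMax (M : MAC X1 X2 Y) (c1 c2 d1 d2 : ℝ) (R : ℝ × ℝ) : Prop :=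
  0 ≤ R.1 ∧ 0 ≤ R.2 ∧
  ∃ C : (n : ℕ) → Code M (n + 1) R.1 R.2 c1 c2 d1 d2,
    Filter.Tendsto (fun n => maxErr (C n)) Filter.atTop (nhds 0)

/-- Average-error sum-capacity `C_sum,avg(C_in, C_out)`. -/
def CsumAvg (M : MAC X1 X2 Y) (Cin Cout : ℝ × ℝ) : ℝ :=
  sSup {s | ∃ R ∈ closure {R : ℝ × ℝ | AchievableAvg M Cin.1 Cin.2 Cout.1 Cout.2 R},
    s = R.1 + R.2}

/-- Maximal-error sum-capacity `C_sum,max(C_in, C_out)`. -/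
def CsumMax (M : MAC X1 X2 Y) (Cin Cout : ℝ × ℝ) : ℝ :=
  sSup {s | ∃ R ∈ closure {R : ℝ × ℝ | AchievableMax M Cin.1 Cin.2 Cout.1 Cout.2 R},
    s = R.1 + R.2}

/-- `max_{p(x₁,x₂)} I(X₁,X₂;Y)`, used to specify when CF input links are large enough
that the CF has full knowledge of both messages. -/
def maxMI (M : MAC X1 X2 Y) : ℝ :=
  sSup {r | ∃ p : X1 × X2 → ℝ, (∀ x, 0 ≤ p x) ∧ (∑ x, p x = 1) ∧
    r = condMI (fun (_ : Unit) (x : X1 × X2) (y : Y) => p x * M.W x.1 x.2 y)}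

end

/-- `H(Y|X₁=x₁,X₂=x₂) = −∑_y p(y|x₁,x₂) log₂ p(y|x₁,x₂)`. -/
noncomputable def chOutEnt {X1 X2 Y : Type} [Fintype X1] [Fintype X2] [Fintype Y]
    (M : MAC X1 X2 Y) (x1 : X1) (x2 : X2) : ℝ :=
  -∑ y, M.W x1 x2 y * Real.logb 2 (M.W x1 x2 y)

/-!
Both sums are expectations of `(x₁, x₂) ↦ H(Y | x₁, x₂) ∈ [0, log₂ |𝒴|]`, under the joint law
`P = p(u,x₁,x₂)` and under `Q = p(u) p(x₁|u) p(x₂|u)`. After centering this function at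
`log₂ |𝒴| / 2`, the two expectations differ by at most `(log₂ |𝒴| / 2) ‖P - Q‖₁`.
The relative entropy `D(P‖Q)` (in nats) is `I(X₁;X₂|U) ln 2`. It dominates the squared Hellinger
distance `∑ (√P - √Q)²` termwise, by `log s ≥ 1 - 1/s`, and Cauchy–Schwarz applied to
`|P - Q| = |√P - √Q| (√P + √Q)` gives `‖P - Q‖₁² ≤ 4 ∑ (√P - √Q)²`. This weak form of Pinsker's
inequality already yields `‖P - Q‖₁ ≤ 2 √(δ ln 2)`.
-/

open Real Finset

section Divergence

variable {ι : Type*} [Fintype ι]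

lemma sum_negMulLog_le_log_card {w : ι → ℝ} (hw0 : ∀ i, 0 ≤ w i) (hw1 : ∑ i, w i = 1) :
    ∑ i, negMulLog (w i) ≤ log (Fintype.card ι) := by
  have hι : Nonempty ι := by
    by_contra h
    simp [not_nonempty_iff.mp h] at hw1
  have hn : (0 : ℝ) < Fintype.card ι := by exact_mod_cast Fintype.card_pos
  have hjensen := concaveOn_negMulLog.le_map_sum (t := univ)
    (w := fun _ => (Fintype.card ι : ℝ)⁻¹) (p := w) (fun _ _ => by positivity)
    (by simp [card_univ, hn.ne']) (fun i _ => hw0 i)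
  simp only [smul_eq_mul, ← mul_sum, hw1, mul_one, negMulLog, log_inv] at hjensen
  field_simp at hjensen
  simpa [negMulLog] using hjensen

lemma sq_sqrt_sub_sqrt_le_mul_log_div_sub_add {a b : ℝ} (ha : 0 ≤ a) (hb : 0 ≤ b)
    (hab : b = 0 → a = 0) :
    (√a - √b) ^ 2 ≤ a * log (a / b) - a + b := by
  rcases ha.eq_or_lt with rfl | ha
  · simp [sq_sqrt hb]
  have hb : 0 < b := hb.lt_of_ne (fun h => ha.ne' (hab h.symm))
  have hsa := sqrt_pos.2 ha
  have hsb := sqrt_pos.2 hb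
  have hlog : 2 * (1 - √b / √a) ≤ log (a / b) := by
    have h := one_sub_inv_le_log_of_pos (div_pos hsa hsb)
    rw [inv_div] at h
    rw [show a / b = (√a / √b) ^ 2 by rw [div_pow, sq_sqrt ha.le, sq_sqrt hb.le], log_pow]
    push_cast
    linarith
  have hmul : a * (√b / √a) = √a * √b := by
    field_simp
    rw [sq_sqrt ha.le]
  nlinarith [sq_sqrt ha.le, sq_sqrt hb.le, mul_le_mul_of_nonneg_left hlog ha.le]

lemma sq_sum_abs_sub_le_mul_sum_sq_sqrt_sub_sqrt {P Q : ι → ℝ} (hP : ∀ i, 0 ≤ P i)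
    (hQ : ∀ i, 0 ≤ Q i) :
    (∑ i, |P i - Q i|) ^ 2 ≤ 2 * (∑ i, P i + ∑ i, Q i) * ∑ i, (√(P i) - √(Q i)) ^ 2 := by
  have hfactor : ∀ i, |P i - Q i| = |√(P i) - √(Q i)| * (√(P i) + √(Q i)) := by
    intro i
    rw [← abs_of_nonneg (add_nonneg (sqrt_nonneg (P i)) (sqrt_nonneg (Q i))), ← abs_mul]
    congr 1
    ring_nf
    rw [sq_sqrt (hP i), sq_sqrt (hQ i)]
  have hsum : ∑ i, (√(P i) + √(Q i)) ^ 2 ≤ 2 * (∑ i, P i + ∑ i, Q i) := by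
    rw [← sum_add_distrib, mul_sum]
    refine sum_le_sum fun i _ => ?_
    nlinarith [sq_nonneg (√(P i) - √(Q i)), sq_sqrt (hP i), sq_sqrt (hQ i)]
  calc (∑ i, |P i - Q i|) ^ 2
      ≤ (∑ i, |√(P i) - √(Q i)| ^ 2) * ∑ i, (√(P i) + √(Q i)) ^ 2 := by
        simp_rw [hfactor]; exact sum_mul_sq_le_sq_mul_sq _ _ _
    _ ≤ 2 * (∑ i, P i + ∑ i, Q i) * ∑ i, (√(P i) - √(Q i)) ^ 2 := by
        simp only [sq_abs]
        rw [mul_comm]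
        exact mul_le_mul_of_nonneg_right hsum (sum_nonneg fun i _ => sq_nonneg _)

lemma sq_sum_abs_sub_le_four_mul_sum_mul_log_div {P Q : ι → ℝ} (hP : ∀ i, 0 ≤ P i)
    (hQ : ∀ i, 0 ≤ Q i) (hP1 : ∑ i, P i = 1) (hQ1 : ∑ i, Q i = 1)
    (hPQ : ∀ i, Q i = 0 → P i = 0) :
    (∑ i, |P i - Q i|) ^ 2 ≤ 4 * ∑ i, P i * log (P i / Q i) := by
  have hhellinger : ∑ i, (√(P i) - √(Q i)) ^ 2 ≤ ∑ i, P i * log (P i / Q i) := by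
    calc ∑ i, (√(P i) - √(Q i)) ^ 2 ≤ ∑ i, (P i * log (P i / Q i) - P i + Q i) :=
          sum_le_sum fun i _ => sq_sqrt_sub_sqrt_le_mul_log_div_sub_add (hP i) (hQ i) (hPQ i)
      _ = ∑ i, P i * log (P i / Q i) := by
          rw [sum_add_distrib, sum_sub_distrib, hP1, hQ1]; ring
  have := sq_sum_abs_sub_le_mul_sum_sq_sqrt_sub_sqrt hP hQ
  rw [hP1, hQ1] at this
  linarith

lemma abs_sum_mul_sub_sum_mul_le {P Q f : ι → ℝ} {L : ℝ} (hPQ : ∑ i, P i = ∑ i, Q i)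
    (hf0 : ∀ i, 0 ≤ f i) (hfL : ∀ i, f i ≤ L) :
    |∑ i, P i * f i - ∑ i, Q i * f i| ≤ L / 2 * ∑ i, |P i - Q i| := by
  have hcenter : ∑ i, P i * f i - ∑ i, Q i * f i = ∑ i, (P i - Q i) * (f i - L / 2) := by
    simp only [sub_mul, mul_sub, sum_sub_distrib, ← sum_mul, hPQ]
    ring
  rw [hcenter, mul_sum]
  refine (abs_sum_le_sum_abs _ _).trans (sum_le_sum fun i _ => ?_)
  rw [abs_mul, mul_comm]
  gcongr
  rw [abs_le]; constructor <;> linarith [hf0 i, hfL i]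

end Divergence

section CondIndep

variable {U A B : Type} [Fintype A] [Fintype B]

-- `p(u) p(a|u) p(b|u)`, spelled as in the theorem; `condIndepProduct_eq` is the usable form.
noncomputable def condIndepProduct (p : U → A → B → ℝ) (u : U) (a : A) (b : B) : ℝ :=
  (∑ a', ∑ b', p u a' b') * ((∑ b', p u a b') / (∑ a', ∑ b', p u a' b')) *
    ((∑ a', p u a' b) / (∑ a', ∑ b', p u a' b'))

variable {p : U → A → B → ℝ}

lemma condIndepProduct_eq (p : U → A → B → ℝ) (u : U) (a : A) (b : B) :
    condIndepProduct p u a b = (∑ b', p u a b') * (∑ a', p u a' b) / ∑ a', ∑ b', p u a' b' := by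
  unfold condIndepProduct
  rcases eq_or_ne (∑ a', ∑ b', p u a' b') 0 with h | h
  · simp [h]
  · field_simp

lemma condIndepProduct_nonneg (hp : ∀ u a b, 0 ≤ p u a b) (u : U) (a : A) (b : B) :
    0 ≤ condIndepProduct p u a b := by
  have hA : 0 ≤ ∑ b', p u a b' := sum_nonneg fun b' _ => hp u a b'
  have hB : 0 ≤ ∑ a', p u a' b := sum_nonneg fun a' _ => hp u a' b
  have hU : 0 ≤ ∑ a', ∑ b', p u a' b' :=
    sum_nonneg fun a' _ => sum_nonneg fun b' _ => hp u a' b'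
  rw [condIndepProduct_eq]
  positivity

lemma sum_condIndepProduct (p : U → A → B → ℝ) (u : U) :
    ∑ a, ∑ b, condIndepProduct p u a b = ∑ a, ∑ b, p u a b := by
  simp only [condIndepProduct_eq, ← sum_div, ← sum_mul_sum]
  rw [sum_comm (f := fun b a => p u a b)]
  exact mul_self_div_self _

lemma marginals_pos_of_pos (hp : ∀ u a b, 0 ≤ p u a b) {u : U} {a : A} {b : B}
    (h : 0 < p u a b) :
    0 < ∑ b', p u a b' ∧ 0 < ∑ a', p u a' b ∧ 0 < ∑ a', ∑ b', p u a' b' := by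
  have hA : 0 < ∑ b', p u a b' :=
    h.trans_le (single_le_sum (fun b' _ => hp u a b') (mem_univ b))
  refine ⟨hA, h.trans_le (single_le_sum (fun a' _ => hp u a' b) (mem_univ a)),
    hA.trans_le (single_le_sum (fun a' _ => sum_nonneg fun b' _ => hp u a' b') (mem_univ a))⟩

lemma eq_zero_of_condIndepProduct_eq_zero (hp : ∀ u a b, 0 ≤ p u a b) {u : U} {a : A} {b : B}
    (h : condIndepProduct p u a b = 0) : p u a b = 0 := by
  refine (hp u a b).eq_or_lt.elim Eq.symm fun hpos => ?_
  obtain ⟨hA, hB, hU⟩ := marginals_pos_of_pos hp hpos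
  rw [condIndepProduct_eq] at h
  exact absurd h (by positivity)

lemma log_two_mul_ent2 {α : Type} [Fintype α] (f : α → ℝ) :
    log 2 * ent2 f = -∑ a, f a * log (f a) := by
  have : log 2 ≠ 0 := (log_pos one_lt_two).ne'
  simp only [ent2, logb, mul_div_assoc', ← sum_div]
  field_simp

lemma log_two_mul_condMI [Fintype U] (hp : ∀ u a b, 0 ≤ p u a b) :
    log 2 * condMI p =
      ∑ u, ∑ a, ∑ b, p u a b * log (p u a b / condIndepProduct p u a b) := by
  have hterm : ∀ u a b, p u a b * log (p u a b / condIndepProduct p u a b) =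
      p u a b * log (p u a b) - p u a b * log (∑ b', p u a b') - p u a b * log (∑ a', p u a' b)
        + p u a b * log (∑ a', ∑ b', p u a' b') := by
    intro u a b
    rcases (hp u a b).eq_or_lt with h | h
    · simp [← h]
    obtain ⟨hA, hB, hU⟩ := marginals_pos_of_pos hp h
    rw [condIndepProduct_eq, div_div_eq_mul_div, log_div (by positivity) (by positivity),
      log_mul h.ne' hU.ne', log_mul hA.ne' hB.ne']
    ring
  have hB : ∀ u, ∑ a, ∑ b, p u a b * log (∑ a', p u a' b) =
      ∑ b, (∑ a, p u a b) * log (∑ a', p u a' b) := by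
    intro u
    rw [sum_comm]
    simp only [sum_mul]
  simp only [condMI, mul_sub, mul_add, log_two_mul_ent2, Fintype.sum_prod_type, hterm,
    sum_add_distrib, sum_sub_distrib, hB, ← sum_mul]
  ring

end CondIndep

section ChannelOutputEntropy

variable {X1 X2 Y : Type} [Fintype X1] [Fintype X2] [Fintype Y]

lemma chOutEnt_eq_sum_negMulLog_div (M : MAC X1 X2 Y) (x1 : X1) (x2 : X2) :
    chOutEnt M x1 x2 = (∑ y, negMulLog (M.W x1 x2 y)) / log 2 := by
  simp only [chOutEnt, logb, negMulLog, neg_mul, sum_neg_distrib, mul_div_assoc', ← sum_div,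
    neg_div]

lemma chOutEnt_nonneg (M : MAC X1 X2 Y) (x1 : X1) (x2 : X2) : 0 ≤ chOutEnt M x1 x2 := by
  rw [chOutEnt_eq_sum_negMulLog_div]
  refine div_nonneg (sum_nonneg fun y _ => negMulLog_nonneg (M.nonneg x1 x2 y) ?_)
    (log_nonneg one_le_two)
  rw [← M.sum_one x1 x2]
  exact single_le_sum (fun y' _ => M.nonneg x1 x2 y') (mem_univ y)

lemma chOutEnt_le_logb_card (M : MAC X1 X2 Y) (x1 : X1) (x2 : X2) :
    chOutEnt M x1 x2 ≤ logb 2 (Fintype.card Y) := by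
  rw [chOutEnt_eq_sum_negMulLog_div, logb]
  gcongr
  exact sum_negMulLog_le_log_card (M.nonneg x1 x2) (M.sum_one x1 x2)

end ChannelOutputEntropy

/-- If `I(X₁;X₂|U) ≤ δ` (in bits), then
`|H(Y|U,X₁,X₂) − H_ind(Y|U,X₁,X₂)| ≤ (log₂|𝒴|)·√(2δ ln 2)`, where
`H_q(Y|U,X₁,X₂) = ∑ q(u,x₁,x₂) H(Y|X₁=x₁,X₂=x₂)` and
`p_ind(u,x₁,x₂) = p(u)p(x₁|u)p(x₂|u)`. -/
theorem condEntropy_givenInputs_diff_bound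
    {U X1 X2 Y : Type} [Fintype U] [Fintype X1] [Fintype X2] [Fintype Y]
    (M : MAC X1 X2 Y) (δ : ℝ) (hδ : 0 ≤ δ)
    (p : U → X1 → X2 → ℝ) (hp : IsPMF3 p) (hMI : condMI p ≤ δ) :
    |(∑ u, ∑ x1, ∑ x2, p u x1 x2 * chOutEnt M x1 x2) -
        (∑ u, ∑ x1, ∑ x2,
          (∑ a, ∑ b, p u a b) *
            ((∑ b, p u x1 b) / (∑ a, ∑ b, p u a b)) *
            ((∑ a, p u a x2) / (∑ a, ∑ b, p u a b)) * chOutEnt M x1 x2)| ≤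
      Real.logb 2 (Fintype.card Y : ℝ) * Real.sqrt (2 * δ * Real.log 2) := by
  obtain ⟨hp0, hp1⟩ := hp
  set L := logb 2 (Fintype.card Y : ℝ)
  have hL : 0 ≤ L := div_nonneg (log_natCast_nonneg _) (log_nonneg one_le_two)
  let P : U × X1 × X2 → ℝ := fun x => p x.1 x.2.1 x.2.2
  let Q : U × X1 × X2 → ℝ := fun x => condIndepProduct p x.1 x.2.1 x.2.2
  have hP1 : ∑ x, P x = 1 := by simpa only [P, Fintype.sum_prod_type] using hp1
  have hQ1 : ∑ x, Q x = 1 := by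
    simpa only [Q, Fintype.sum_prod_type, sum_condIndepProduct] using hp1
  have hKL : (∑ x, |P x - Q x|) ^ 2 ≤ 4 * (log 2 * δ) := by
    refine (sq_sum_abs_sub_le_four_mul_sum_mul_log_div (fun x => hp0 _ _ _)
      (fun x => condIndepProduct_nonneg hp0 _ _ _) hP1 hQ1
      (fun x => eq_zero_of_condIndepProduct_eq_zero hp0)).trans ?_
    simp only [Fintype.sum_prod_type, ← log_two_mul_condMI hp0]
    gcongr
  have hL1 : ∑ x, |P x - Q x| ≤ 2 * √(2 * δ * log 2) := by
    have h2 : 2 * √(2 * δ * log 2) = √(2 ^ 2 * (2 * δ * log 2)) := by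
      rw [sqrt_mul (sq_nonneg 2), sqrt_sq zero_le_two]
    rw [h2]
    refine le_sqrt_of_sq_le (hKL.trans ?_)
    linarith [mul_nonneg hδ (log_nonneg one_le_two)]
  calc _ = |∑ x, P x * chOutEnt M x.2.1 x.2.2 - ∑ x, Q x * chOutEnt M x.2.1 x.2.2| := by
        simp only [P, Q, Fintype.sum_prod_type, condIndepProduct]
    _ ≤ L / 2 * ∑ x, |P x - Q x| :=
        abs_sum_mul_sub_sum_mul_le (hP1.trans hQ1.symm) (fun x => chOutEnt_nonneg M _ _)
          (fun x => chOutEnt_le_logb_card M _ _)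
    _ ≤ L / 2 * (2 * √(2 * δ * log 2)) := by gcongr
    _ = L * √(2 * δ * log 2) := by ring
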